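/- arXiv:1512.04513 — 2 statements merged into one kernel-verified Lean document; each statement's English description precedes it below -/
import Mathlib

section
/- For every n ≥ 1, the number of (n+1)-element subsets B of {1, 2, ..., 2n+1} for which the (n+1)×(n+1) submatrix of M_{2n} on the columns labeled by B has nonzero determinant equals the number of n-element subsets B' of {1, 2, ..., 2n} for which the n×n submatrix of M_{2n-1} on the columns labeled by B' has nonzero determinant. -/
/-- The determinant of the `(n+1)×(n+1)` submatrix of the Dehn–Sommerville matrix `M_{2n}`
on the columns labeled by `B` (entry in row `i` and column labeled `b`:
`C(2n+1-i, 2n+2-b) - C(i, 2n+2-b)`), columns taken in increasing order. -/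
def dsDetEven (n : ℕ) (B : Finset ℕ) (h : B.card = n + 1) : ℤ :=
  Matrix.det fun i k : Fin (n + 1) =>
    (Nat.choose (2 * n + 1 - (i : ℕ)) (2 * n + 2 - (B.orderIsoOfFin h k : ℕ)) : ℤ)
      - (Nat.choose (i : ℕ) (2 * n + 2 - (B.orderIsoOfFin h k : ℕ)) : ℤ)

/-- The determinant of the `n×n` submatrix of the Dehn–Sommerville matrix `M_{2n-1}`
on the columns labeled by `B` (entry in row `i` and column labeled `b`:
`C(2n-i, 2n+1-b) - C(i, 2n+1-b)`), columns taken in increasing order. -/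
def dsDetOdd (n : ℕ) (B : Finset ℕ) (h : B.card = n) : ℤ :=
  Matrix.det fun i k : Fin n =>
    (Nat.choose (2 * n - (i : ℕ)) (2 * n + 1 - (B.orderIsoOfFin h k : ℕ)) : ℤ)
      - (Nat.choose (i : ℕ) (2 * n + 1 - (B.orderIsoOfFin h k : ℕ)) : ℤ)

/-! Write a column label `b` of `M_d` as `c = d + 2 - b`, so that the entry in row `i` is
`C(d+1-i, c) - C(i, c)`. The identity `(a - c) C(a, c) = a C(a-1, c)` shows that scaling
column `c` of `M_{2n}` by `2n+1-c` turns its row `i` into `i (row i-1) + (2n+1-i) (row i)` of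
`M_{2n-1}`, extended by a row `n` that vanishes identically. Column `b = 1` is the only one
killed by the scaling. If it is not chosen, the scaled submatrix factors through a matrix with
a zero row, so it is singular. If it is chosen, it is the first unit vector; deleting it
together with row `0` leaves, after scaling, an upper bidiagonal matrix with diagonal
`1, …, n` times the submatrix of `M_{2n-1}` on the columns `B \ {1}` shifted down by one.
Hence `B' ↦ {1} ∪ (B' + 1)` is a bijection between the two families of bases. -/

open Finset Matrix

lemma sub_mul_choose (a c : ℕ) : ((a : ℤ) - c) * a.choose c = a * (a - 1).choose c := by
  rcases a with _ | a
  · rcases c with _ | c <;> simp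
  rcases le_or_gt c (a + 1) with hc | hc
  · have h := Nat.choose_mul_succ_eq a c
    zify [hc] at h
    simp only [add_tsub_cancel_right]
    push_cast
    linear_combination -h
  · simp [Nat.choose_eq_zero_of_lt hc, Nat.choose_eq_zero_of_lt (by omega : a < c)]

/-- `dsEntry (d + 1) i c` is the entry of `M_d` in row `i` and column labeled `d + 2 - c`. -/
def dsEntry (m i c : ℕ) : ℤ := ((m - i).choose c : ℤ) - (i.choose c : ℤ)

lemma dsEntry_succ_mul (m i c : ℕ) (hi : i ≤ m + 1) :
    ((m + 1 : ℤ) - c) * dsEntry (m + 1) i c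
      = i * dsEntry m (i - 1) c + ((m + 1 : ℤ) - i) * dsEntry m i c := by
  unfold dsEntry
  rcases i with _ | j
  · have h0 := sub_mul_choose 0 c
    have h1 := sub_mul_choose (m + 1) c
    push_cast at h0 h1 ⊢
    simp only [Nat.sub_zero] at h0 h1 ⊢
    linear_combination h1 - h0
  · have h1 := sub_mul_choose (m - j) c
    have h2 := sub_mul_choose (j + 1) c
    rw [show m + 1 - (j + 1) = m - j by omega, show m - j - 1 = m - (j + 1) by omega,
      Nat.add_sub_cancel] at *
    push_cast [show j ≤ m by omega] at h1 h2 ⊢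
    linear_combination h1 - h2

lemma dsEntry_two_mul_self (n c : ℕ) : dsEntry (2 * n) n c = 0 := by
  simp [dsEntry, two_mul]

def dsMatrix {r : ℕ} (m : ℕ) (c : Fin r → ℕ) : Matrix (Fin r) (Fin r) ℤ :=
  of fun i k => dsEntry m i (c k)

def dsLower (m s : ℕ) : Matrix (Fin (s + 1)) (Fin (s + 1)) ℤ :=
  of fun i j => if j = i then (m + 1 : ℤ) - i else if (j : ℕ) + 1 = i then (i : ℤ) else 0

lemma dsLower_mul_apply_zero {m s : ℕ} (X : Matrix (Fin (s + 1)) (Fin (s + 1)) ℤ)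
    (k : Fin (s + 1)) : (dsLower m s * X) 0 k = (m + 1 : ℤ) * X 0 k := by
  rw [mul_apply, Fintype.sum_eq_single 0 fun j hj => by simp [dsLower, hj]]
  simp [dsLower]

lemma dsLower_mul_apply_succ {m s : ℕ} (X : Matrix (Fin (s + 1)) (Fin (s + 1)) ℤ) (i : Fin s)
    (k : Fin (s + 1)) :
    (dsLower m s * X) i.succ k
      = ((i : ℤ) + 1) * X i.castSucc k + ((m : ℤ) - i) * X i.succ k := by
  have hne : i.castSucc ≠ i.succ := (Fin.castSucc_lt_succ (i := i)).ne
  rw [mul_apply, Fintype.sum_eq_add i.castSucc i.succ hne]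
  · simp only [dsLower, of_apply, if_neg hne, Fin.val_castSucc, Fin.val_succ]
    push_cast
    ring
  · rintro j ⟨h1, h2⟩
    have : (j : ℕ) ≠ i := fun h => h1 (Fin.ext h)
    simp [dsLower, h2, this]

lemma dsMatrix_succ_mul_diagonal {m s : ℕ} (hs : s ≤ m) (c : Fin (s + 1) → ℕ) :
    dsMatrix (m + 1) c * diagonal (fun k => (m + 1 : ℤ) - c k) = dsLower m s * dsMatrix m c := by
  ext i k
  rw [mul_diagonal, mul_comm]
  cases i using Fin.cases with
  | zero =>
    rw [dsLower_mul_apply_zero]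
    simpa [dsMatrix] using dsEntry_succ_mul m 0 (c k) (by omega)
  | succ i =>
    rw [dsLower_mul_apply_succ]
    simpa [dsMatrix] using dsEntry_succ_mul m (i + 1) (c k) (by omega)

lemma det_dsMatrix_eq_zero {n : ℕ} (c : Fin (n + 1) → ℕ) (hc : ∀ k, c k ≠ 2 * n + 1) :
    (dsMatrix (2 * n + 1) c).det = 0 := by
  have hfactor := congrArg det (dsMatrix_succ_mul_diagonal (m := 2 * n) (by omega) c)
  have hlast : (dsMatrix (2 * n) c).det = 0 :=
    det_eq_zero_of_row_eq_zero (Fin.last n) fun k => dsEntry_two_mul_self n (c k)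
  rw [det_mul, det_mul, det_diagonal, hlast, mul_zero] at hfactor
  refine (mul_eq_zero.mp hfactor).resolve_right (prod_ne_zero_iff.mpr fun k _ => ?_)
  have := hc k
  push_cast
  omega

lemma det_dsMatrix_cons_eq_det_submatrix {n : ℕ} (c : Fin n → ℕ) :
    (dsMatrix (2 * n + 1) (Fin.cons (2 * n + 1) c : Fin (n + 1) → ℕ)).det
      = ((dsMatrix (2 * n + 1) (Fin.cons (2 * n + 1) c : Fin (n + 1) → ℕ)).submatrix
          Fin.succ Fin.succ).det := by
  rw [det_succ_column_zero, Fin.sum_univ_succ, Fintype.sum_eq_zero]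
  · simp [dsMatrix, dsEntry]
  · intro i
    have hi : (i : ℕ) + 1 < 2 * n + 1 := by omega
    simp [dsMatrix, dsEntry, Nat.choose_eq_zero_of_lt hi,
      Nat.choose_eq_zero_of_lt (by omega : 2 * n - i < 2 * n + 1)]

lemma dsMatrix_cons_submatrix_mul_diagonal {n : ℕ} (c : Fin n → ℕ) :
    (dsMatrix (2 * n + 1) (Fin.cons (2 * n + 1) c : Fin (n + 1) → ℕ)).submatrix
          Fin.succ Fin.succ * diagonal (fun k => (2 * n + 1 : ℤ) - c k)
      = (dsLower (2 * n) n).submatrix Fin.succ Fin.castSucc * dsMatrix (2 * n) c := by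
  ext i k
  have h := congrFun (congrFun
    (dsMatrix_succ_mul_diagonal (m := 2 * n) (by omega) (Fin.cons (2 * n + 1) c)) i.succ) k.succ
  rw [mul_diagonal, mul_apply, Fin.sum_univ_castSucc] at h
  rw [mul_diagonal, mul_apply]
  simpa [mul_apply, dsMatrix, dsEntry_two_mul_self] using h

lemma det_dsLower_submatrix_succ_castSucc (m n : ℕ) :
    ((dsLower m n).submatrix Fin.succ Fin.castSucc).det = ∏ i : Fin n, ((i : ℤ) + 1) := by
  rw [det_of_isUpperTriangular]
  · refine prod_congr rfl fun i _ => ?_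
    simp [dsLower, (Fin.castSucc_lt_succ (i := i)).ne]
  · intro i j (hji : j < i)
    have h1 : j.castSucc ≠ i.succ := fun h => by simp [Fin.ext_iff] at h; omega
    have h2 : (j : ℕ) ≠ i := by omega
    simp [dsLower, h1, h2]

lemma det_dsMatrix_cons_ne_zero_iff {n : ℕ} (c : Fin n → ℕ) (hc : ∀ k, c k ≠ 2 * n + 1) :
    (dsMatrix (2 * n + 1) (Fin.cons (2 * n + 1) c : Fin (n + 1) → ℕ)).det ≠ 0
      ↔ (dsMatrix (2 * n) c).det ≠ 0 := by
  have hfactor := congrArg det (dsMatrix_cons_submatrix_mul_diagonal c)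
  rw [det_mul, det_mul, det_diagonal, det_dsLower_submatrix_succ_castSucc,
    ← det_dsMatrix_cons_eq_det_submatrix] at hfactor
  have hv : ∏ k, ((2 * n + 1 : ℤ) - c k) ≠ 0 :=
    prod_ne_zero_iff.mpr fun k _ => by have := hc k; omega
  have hU : ∏ i : Fin n, ((i : ℤ) + 1) ≠ 0 := prod_ne_zero_iff.mpr fun i _ => by positivity
  rw [← mul_ne_zero_iff_right hv, hfactor, mul_ne_zero_iff_left hU]

lemma orderEmbOfFin_insert {α : Type*} [LinearOrder α] {a : α} {s : Finset α} {k : ℕ}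
    (ha : ∀ x ∈ s, a < x) (h : (insert a s).card = k + 1) (hs : s.card = k) :
    ⇑((insert a s).orderEmbOfFin h) = Fin.cons a (s.orderEmbOfFin hs) :=
  (orderEmbOfFin_unique h (fun i => by cases i using Fin.cases <;> simp)
    (Fin.strictMono_cons.mpr ⟨fun j => ha _ (orderEmbOfFin_mem s hs j),
      (orderEmbOfFin s hs).strictMono⟩)).symm

lemma orderEmbOfFin_image {α β : Type*} [LinearOrder α] [LinearOrder β] {f : α → β}
    (hf : StrictMono f) {s : Finset α} {k : ℕ} (h : (s.image f).card = k) (hs : s.card = k) :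
    ⇑((s.image f).orderEmbOfFin h) = f ∘ s.orderEmbOfFin hs :=
  (orderEmbOfFin_unique h (fun i => mem_image_of_mem f (orderEmbOfFin_mem s hs i))
    (hf.comp (orderEmbOfFin s hs).strictMono)).symm

lemma dsDetEven_eq (n : ℕ) (B : Finset ℕ) (h : B.card = n + 1) :
    dsDetEven n B h = (dsMatrix (2 * n + 1) fun k => 2 * n + 2 - B.orderEmbOfFin h k).det :=
  rfl

lemma dsDetOdd_eq (n : ℕ) (B : Finset ℕ) (h : B.card = n) :
    dsDetOdd n B h = (dsMatrix (2 * n) fun k => 2 * n + 1 - B.orderEmbOfFin h k).det :=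
  rfl

lemma dsDetEven_insert_one_ne_zero_iff {n : ℕ} {B : Finset ℕ} (hsub : B ⊆ Icc 1 (2 * n))
    (hB : B.card = n) (h : (insert 1 (B.image (· + 1))).card = n + 1) :
    dsDetEven n (insert 1 (B.image (· + 1))) h ≠ 0 ↔ dsDetOdd n B hB ≠ 0 := by
  have hpos k : 1 ≤ B.orderEmbOfFin hB k := (mem_Icc.mp (hsub (orderEmbOfFin_mem B hB k))).1
  have hcols : (fun k => 2 * n + 2 - (insert 1 (B.image (· + 1))).orderEmbOfFin h k)
      = Fin.cons (2 * n + 1) fun k => 2 * n + 1 - B.orderEmbOfFin hB k := by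
    have himage : (B.image (· + 1)).card = n :=
      (card_image_of_injective _ (add_left_injective 1)).trans hB
    have hgt : ∀ x ∈ B.image (· + 1), 1 < x := by
      simp only [mem_image]
      rintro _ ⟨y, hy, rfl⟩
      have := (mem_Icc.mp (hsub hy)).1
      omega
    rw [orderEmbOfFin_insert hgt h himage,
      orderEmbOfFin_image (f := (· + 1)) (strictMono_id.add_const 1) himage hB]
    funext k
    cases k using Fin.cases <;> simp
  rw [dsDetEven_eq, dsDetOdd_eq, hcols]
  exact det_dsMatrix_cons_ne_zero_iff _ fun k => by have := hpos k; omega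

def dsEvenBases (n : ℕ) : Set (Finset ℕ) :=
  {B | B ⊆ Icc 1 (2 * n + 1) ∧ ∃ hB : B.card = n + 1, dsDetEven n B hB ≠ 0}

def dsOddBases (n : ℕ) : Set (Finset ℕ) :=
  {B | B ⊆ Icc 1 (2 * n) ∧ ∃ hB : B.card = n, dsDetOdd n B hB ≠ 0}

lemma one_mem_of_mem_dsEvenBases {n : ℕ} {B : Finset ℕ} (hB : B ∈ dsEvenBases n) :
    1 ∈ B := by
  obtain ⟨hsub, hcard, hdet⟩ := hB
  by_contra h1
  refine hdet ((dsDetEven_eq n B hcard).trans (det_dsMatrix_eq_zero _ fun k => ?_))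
  have hmem := orderEmbOfFin_mem B hcard k
  have := (mem_Icc.mp (hsub hmem)).1
  have : B.orderEmbOfFin hcard k ≠ 1 := fun h => h1 (h ▸ hmem)
  omega

lemma insert_one_image_succ_subset {m : ℕ} {B : Finset ℕ} (hsub : B ⊆ Icc 1 m) :
    insert 1 (B.image (· + 1)) ⊆ Icc 1 (m + 1) := by
  intro x hx
  simp only [mem_insert, mem_image] at hx
  rcases hx with rfl | ⟨y, hy, rfl⟩
  · simp
  · have := mem_Icc.mp (hsub hy)
    simp only [mem_Icc]
    omega

lemma one_notMem_image_succ {m : ℕ} {B : Finset ℕ} (hsub : B ⊆ Icc 1 m) :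
    1 ∉ B.image (· + 1) := by
  simp only [mem_image, not_exists, not_and]
  intro y hy
  have := (mem_Icc.mp (hsub hy)).1
  omega

lemma card_insert_one_image_succ {m : ℕ} {B : Finset ℕ} (hsub : B ⊆ Icc 1 m) :
    (insert 1 (B.image (· + 1))).card = B.card + 1 := by
  rw [card_insert_of_notMem (one_notMem_image_succ hsub),
    card_image_of_injective _ (add_left_injective 1)]

lemma exists_eq_insert_one_image_succ {m : ℕ} {B : Finset ℕ} (hsub : B ⊆ Icc 1 (m + 1))
    (h1 : 1 ∈ B) : ∃ B' ⊆ Icc 1 m, B = insert 1 (B'.image (· + 1)) := by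
  refine ⟨(B.erase 1).image (· - 1), ?_, ?_⟩
  · intro x hx
    simp only [mem_image, mem_erase] at hx
    obtain ⟨y, ⟨hy1, hy⟩, rfl⟩ := hx
    have := mem_Icc.mp (hsub hy)
    simp only [mem_Icc]
    omega
  · rw [image_image, image_congr (g := id), image_id, insert_erase h1]
    intro x hx
    have := (mem_Icc.mp (hsub (mem_of_mem_erase hx))).1
    simp only [Function.comp_apply, id]
    omega

lemma image_dsOddBases (n : ℕ) :
    (fun B => insert 1 (B.image (· + 1))) '' dsOddBases n = dsEvenBases n := by
  ext B
  constructor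
  · rintro ⟨B', ⟨hsub, hcard, hdet⟩, rfl⟩
    have hcard' := (card_insert_one_image_succ hsub).trans (congrArg (· + 1) hcard)
    exact ⟨insert_one_image_succ_subset hsub, hcard',
      (dsDetEven_insert_one_ne_zero_iff hsub hcard hcard').mpr hdet⟩
  · intro hB
    obtain ⟨B', hsub, rfl⟩ :=
      exists_eq_insert_one_image_succ hB.1 (one_mem_of_mem_dsEvenBases hB)
    obtain ⟨-, hcard, hdet⟩ := hB
    have hcard' : B'.card = n := by
      have := card_insert_one_image_succ hsub
      omega
    exact ⟨B', ⟨hsub, hcard', (dsDetEven_insert_one_ne_zero_iff hsub hcard' hcard).mp hdet⟩,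
      rfl⟩

lemma injOn_insert_one_image_succ (m : ℕ) :
    Set.InjOn (fun B => insert 1 (B.image (· + 1))) {B : Finset ℕ | B ⊆ Icc 1 m} := by
  intro B₁ h₁ B₂ h₂ heq
  have := congrArg (·.erase 1) heq
  simp only [erase_insert (one_notMem_image_succ h₁),
    erase_insert (one_notMem_image_succ h₂)] at this
  exact image_injective (add_left_injective 1) this

theorem card_dsEven_bases_eq_card_dsOdd_bases_general (n : ℕ) :
    {B : Finset ℕ | B ⊆ Finset.Icc 1 (2 * n + 1) ∧
        ∃ hB : B.card = n + 1, dsDetEven n B hB ≠ 0}.ncard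
      = {B' : Finset ℕ | B' ⊆ Finset.Icc 1 (2 * n) ∧
          ∃ hB' : B'.card = n, dsDetOdd n B' hB' ≠ 0}.ncard := by
  change (dsEvenBases n).ncard = (dsOddBases n).ncard
  rw [← image_dsOddBases,
    ((injOn_insert_one_image_succ (2 * n)).mono fun B hB => hB.1).ncard_image]

/-- **Lemma.** For every `n ≥ 1`, the number of `(n+1)`-subsets of `{1,…,2n+1}` giving an
invertible submatrix of `M_{2n}` equals the number of `n`-subsets of `{1,…,2n}` giving an
invertible submatrix of `M_{2n-1}`. -/
theorem card_dsEven_bases_eq_card_dsOdd_bases (n : ℕ) (hn : 1 ≤ n) :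
    {B : Finset ℕ | B ⊆ Finset.Icc 1 (2 * n + 1) ∧
        ∃ hB : B.card = n + 1, dsDetEven n B hB ≠ 0}.ncard
      = {B' : Finset ℕ | B' ⊆ Finset.Icc 1 (2 * n) ∧
          ∃ hB' : B'.card = n, dsDetOdd n B' hB' ≠ 0}.ncard :=
  card_dsEven_bases_eq_card_dsOdd_bases_general n
end

section
/- Let n ≥ 1 and let B = {b_1 < b_2 < ... < b_n} be an n-element subset of {1, 2, ..., 2n}. Then the n×n integer matrix whose entry in row i (for 0 ≤ i ≤ n-1) and column k (for 1 ≤ k ≤ n) is C(2n-i, 2n+1-b_k) - C(i, 2n+1-b_k) has nonzero determinant if and only if b_k ≤ 2k for every k with 1 ≤ k ≤ n. -/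
/-!
Write the columns through their lower indices `c = 2n+1-b`, a strictly decreasing tuple, and
prove by induction on `n` that the determinant is nonnegative, and nonzero exactly when
`2n - 2j - 1 ≤ c j ≤ 2n` for all `j`.

If `c 0 ≤ 2n` the rows are dependent: the coefficients `α` of the anti-palindromic polynomial
`(1 + x)(1 - x)^(2n+1)` satisfy `∑ᵢ αᵢ (C(2n+2-i, c) - C(i, c)) = [c = 2n+2] + 2 [c = 2n+1]`,
since after substituting `x = 1 + y` the polynomial becomes `-(2 + y) y^(2n+1)`.
For `c 0 ∈ {2n+1, 2n+2}` the same row operation (or the column `e₀`) reduces the determinant to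
a positive multiple of the minor obtained by deleting row and column `0`. By Pascal's rule each
column of this minor is the sum of the columns with indices `c` and `c - 1` of the matrix one size
smaller, so the minor is a sum of `2^n` smaller determinants of the same kind. These are
nonnegative by induction, and one of them is nonzero exactly when the condition holds.
-/

open Finset Matrix

theorem sum_neg_one_pow_mul_choose_mul_pow {R : Type*} [CommRing R] (y : R) (m : ℕ) :
    ∑ j ∈ range (m + 1), (-1) ^ j * (m.choose j : R) * y ^ j = (1 - y) ^ m := by
  rw [sub_eq_neg_add, add_pow]
  refine sum_congr rfl fun j _ => ?_
  rw [neg_pow, one_pow]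
  ring

open Polynomial in
theorem sum_neg_one_pow_mul_choose_mul_choose_add_choose_succ (n c : ℕ) :
    ∑ j ∈ range (2 * n + 2),
        (-1) ^ j * ((2 * n + 1).choose j : ℤ) * (j.choose c + (j + 1).choose c)
      = -(if c = 2 * n + 2 then 1 else if c = 2 * n + 1 then 2 else 0) := by
  have h := congrArg (fun p : ℤ[X] => ((X + 2) * p).coeff c)
    (sum_neg_one_pow_mul_choose_mul_pow (X + 1 : ℤ[X]) (2 * n + 1))
  have hrhs : (X + 2) * (1 - (X + 1)) ^ (2 * n + 1)
      = -(X ^ (2 * n + 2) + C 2 * X ^ (2 * n + 1) : ℤ[X]) := by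
    rw [show (1 - (X + 1) : ℤ[X]) = -X by ring, Odd.neg_pow ⟨n, rfl⟩, C_ofNat]
    ring
  have hterm (j : ℕ) : (X + 2) * ((-1) ^ j * ((2 * n + 1).choose j : ℤ[X]) * (X + 1) ^ j)
      = C ((-1) ^ j * ((2 * n + 1).choose j : ℤ)) * ((X + 1) ^ j + (X + 1) ^ (j + 1)) := by
    simp only [C_mul, C_pow, C_neg, C_1, map_natCast]
    ring
  simp only [hrhs, mul_sum, finsetSum_coeff, hterm, coeff_C_mul, coeff_add, coeff_X_add_one_pow,
    coeff_neg, coeff_X_pow] at h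
  rw [h]
  split_ifs <;> omega

theorem sum_range_two_mul_eq_sum_add_reflect {M : Type*} [AddCommMonoid M] (f : ℕ → M) (N : ℕ) :
    ∑ j ∈ range (2 * N), f j = ∑ i ∈ range N, (f i + f (2 * N - 1 - i)) := by
  rw [two_mul, sum_range_add, sum_add_distrib, ← sum_range_reflect (fun k => f (N + k)) N]
  congr 1
  exact sum_congr rfl fun i hi => by rw [mem_range] at hi; congr 1; omega

theorem neg_one_pow_mul_choose_odd_sub (n i : ℕ) (hi : i ≤ 2 * n + 1) :
    (-1) ^ (2 * n + 1 - i) * ((2 * n + 1).choose (2 * n + 1 - i) : ℤ)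
      = -((-1) ^ i * (2 * n + 1).choose i) := by
  have hpow : (-1 : ℤ) ^ (2 * n + 1 - i) * (-1) ^ i = -1 := by
    rw [← pow_add, Nat.sub_add_cancel hi, Odd.neg_one_pow ⟨n, rfl⟩]
  have hsq : ((-1 : ℤ) ^ i) ^ 2 = 1 := by rw [← pow_mul, pow_mul', neg_one_sq, one_pow]
  rw [Nat.choose_symm hi]
  linear_combination ((-1) ^ i * ((2 * n + 1).choose i : ℤ)) * hpow
    - ((-1) ^ (2 * n + 1 - i) * ((2 * n + 1).choose i : ℤ)) * hsq

theorem StrictAnti.antitone_add_val {m : ℕ} {c : Fin m → ℕ} (hc : StrictAnti c) :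
    Antitone fun k : Fin m => c k + k := by
  rcases m with _ | m
  · exact fun j k _ => by rw [Subsingleton.elim j k]
  · refine Fin.antitone_iff_succ_le.2 fun i => ?_
    have := hc (Fin.castSucc_lt_succ (i := i))
    simp only [Fin.val_succ, Fin.val_castSucc]
    omega

namespace Matrix

variable {n : ℕ} {R : Type*} [CommRing R]

theorem det_add_eq_sum_det_piecewise (A B : Matrix (Fin n) (Fin n) R) :
    (A + B).det = ∑ s : Finset (Fin n), Matrix.det (s.piecewise A B) :=
  detRowAlternating.map_add_univ A B

theorem det_eq_mul_det_submatrix_of_row_zero (A : Matrix (Fin (n + 1)) (Fin (n + 1)) R)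
    (h : ∀ k ≠ 0, A 0 k = 0) : A.det = A 0 0 * (A.submatrix Fin.succ Fin.succ).det := by
  rw [det_succ_row_zero, Fin.sum_univ_succ,
    Fintype.sum_eq_zero _ fun k => by rw [h k.succ k.succ_ne_zero]; ring]
  simp

end Matrix

namespace DehnSommerville

def entry (n c i : ℕ) : ℤ := (2 * n - i).choose c - i.choose c

def matrix (n : ℕ) (c : Fin n → ℕ) : Matrix (Fin n) (Fin n) ℤ :=
  Matrix.of fun i k => entry n (c k) i

def Admissible (n : ℕ) (c : Fin n → ℕ) : Prop :=
  StrictAnti c ∧ ∀ j : Fin n, 2 * n ≤ c j + 2 * j + 1 ∧ c j ≤ 2 * n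

/-- The coefficients of `(1 + x)(1 - x)^(2n+1)`. -/
def rowWeight (n : ℕ) : ℕ → ℤ
  | 0 => 1
  | i + 1 => (-1) ^ (i + 1) * (2 * n + 1).choose (i + 1) + (-1) ^ i * (2 * n + 1).choose i

def pascalCols {n : ℕ} (c : Fin (n + 1) → ℕ) (s : Finset (Fin n)) : Fin n → ℕ :=
  s.piecewise (fun r => c r.succ) (fun r => c r.succ - 1)

theorem entry_succ_succ (n c i : ℕ) (hi : i ≤ 2 * n) :
    entry (n + 1) c (i + 1) = entry n c i + entry n (c - 1) i := by
  rcases c with _ | c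
  · simp [entry]
  · rw [entry, entry, entry, show 2 * (n + 1) - (i + 1) = 2 * n - i + 1 by omega,
      Nat.choose_succ_succ, Nat.choose_succ_succ, Nat.add_sub_cancel]
    push_cast
    ring

theorem entry_eq_zero_of_two_mul_lt {n c i : ℕ} (hc : 2 * n < c) (hi : i ≤ 2 * n) : entry n c i = 0 := by
  rw [entry, Nat.choose_eq_zero_of_lt (by omega), Nat.choose_eq_zero_of_lt (by omega), sub_self]

theorem sum_rowWeight_mul_entry (n c : ℕ) :
    ∑ i ∈ range (n + 1), rowWeight n i * entry (n + 1) c i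
      = if c = 2 * n + 2 then 1 else if c = 2 * n + 1 then 2 else 0 := by
  set a : ℕ → ℤ := fun i => (-1) ^ i * (2 * n + 1).choose i with ha
  set H : ℕ → ℤ := fun k => k.choose c + (k + 1).choose c with hH
  have hshift : ∑ i ∈ range (n + 1), rowWeight n i * entry (n + 1) c i
      = ∑ i ∈ range (n + 1), a i * (entry (n + 1) c i + entry (n + 1) c (i + 1)) := by
    have hmid : entry (n + 1) c (n + 1) = 0 := by
      simp [entry, show 2 * (n + 1) - (n + 1) = n + 1 by omega]
    simp only [mul_add, sum_add_distrib]
    rw [sum_range_succ' (fun i => rowWeight n i * _), sum_range_succ' (fun i => a i * _),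
      sum_range_succ (fun i => a i * entry (n + 1) c (i + 1)), hmid]
    simp [rowWeight, ha, add_mul, sum_add_distrib]
    ring
  have hpair (i : ℕ) (hi : i ∈ range (n + 1)) :
      entry (n + 1) c i + entry (n + 1) c (i + 1) = H (2 * n + 1 - i) - H i := by
    rw [mem_range] at hi
    simp only [entry, hH, show 2 * (n + 1) - i = 2 * n + 1 - i + 1 by omega,
      show 2 * (n + 1) - (i + 1) = 2 * n + 1 - i by omega]
    ring
  have hfold : ∑ j ∈ range (2 * n + 2), a j * H j
      = ∑ i ∈ range (n + 1), a i * (H i - H (2 * n + 1 - i)) := by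
    rw [show 2 * n + 2 = 2 * (n + 1) by ring, sum_range_two_mul_eq_sum_add_reflect]
    refine sum_congr rfl fun i hi => ?_
    rw [mem_range] at hi
    simp only [ha, show 2 * (n + 1) - 1 - i = 2 * n + 1 - i by omega,
      neg_one_pow_mul_choose_odd_sub n i (by omega)]
    ring
  calc ∑ i ∈ range (n + 1), rowWeight n i * entry (n + 1) c i
      = ∑ i ∈ range (n + 1), a i * (H (2 * n + 1 - i) - H i) := by
        rw [hshift]; exact sum_congr rfl fun i hi => by rw [hpair i hi]
    _ = -∑ j ∈ range (2 * n + 2), a j * H j := by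
        rw [hfold, ← sum_neg_distrib]; exact sum_congr rfl fun i _ => by ring
    _ = _ := by
        rw [neg_eq_iff_eq_neg]; exact sum_neg_one_pow_mul_choose_mul_choose_add_choose_succ n c

section

variable {n : ℕ}

theorem det_matrix_eq_zero_of_not_strictAnti {c : Fin n → ℕ} (hc : Antitone c)
    (hs : ¬StrictAnti c) : (matrix n c).det = 0 := by
  obtain ⟨j, k, hjk, hne⟩ : ∃ j k, c j = c k ∧ j ≠ k := by
    simpa [hc.strictAnti_iff_injective, Function.Injective] using hs
  exact det_zero_of_column_eq hne fun i => by simp [matrix, hjk]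

theorem det_matrix_eq_zero_of_two_mul_lt {c : Fin n → ℕ} (k : Fin n) (hk : 2 * n < c k) :
    (matrix n c).det = 0 :=
  det_eq_zero_of_column_eq_zero k fun i => entry_eq_zero_of_two_mul_lt hk (by omega)

theorem sum_rowWeight_smul_matrix (c : Fin (n + 1) → ℕ) (k : Fin (n + 1)) :
    (∑ i : Fin (n + 1), rowWeight n i • matrix (n + 1) c i) k
      = if c k = 2 * n + 2 then 1 else if c k = 2 * n + 1 then 2 else 0 := by
  rw [← sum_rowWeight_mul_entry,
    ← Fin.sum_univ_eq_sum_range (fun i => rowWeight n i * entry (n + 1) (c k) i)]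
  simp [matrix]

theorem det_matrix_succ_eq_det_updateRow (c : Fin (n + 1) → ℕ) :
    (matrix (n + 1) c).det = ((matrix (n + 1) c).updateRow 0
      (∑ i : Fin (n + 1), rowWeight n i • matrix (n + 1) c i)).det := by
  rw [det_updateRow_sum]
  simp [rowWeight]

theorem det_matrix_succ_eq_zero {c : Fin (n + 1) → ℕ} (hc : ∀ k, c k ≤ 2 * n) :
    (matrix (n + 1) c).det = 0 := by
  rw [det_matrix_succ_eq_det_updateRow]
  refine det_eq_zero_of_row_eq_zero 0 fun k => ?_
  rw [updateRow_self, sum_rowWeight_smul_matrix, if_neg (by have := hc k; omega),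
    if_neg (by have := hc k; omega)]

theorem det_matrix_succ_eq_two_mul_det_submatrix {c : Fin (n + 1) → ℕ} (h0 : c 0 = 2 * n + 1)
    (hc : ∀ k ≠ 0, c k ≤ 2 * n) :
    (matrix (n + 1) c).det = 2 * ((matrix (n + 1) c).submatrix Fin.succ Fin.succ).det := by
  rw [det_matrix_succ_eq_det_updateRow, det_eq_mul_det_submatrix_of_row_zero]
  · rw [updateRow_self, sum_rowWeight_smul_matrix, h0, if_neg (by omega), if_pos rfl,
      ← Fin.succAbove_zero, submatrix_updateRow_succAbove]
  · intro k hk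
    rw [updateRow_self, sum_rowWeight_smul_matrix, if_neg (by have := hc k hk; omega),
      if_neg (by have := hc k hk; omega)]

theorem det_matrix_succ_eq_det_submatrix {c : Fin (n + 1) → ℕ} (h0 : c 0 = 2 * n + 2) :
    (matrix (n + 1) c).det = ((matrix (n + 1) c).submatrix Fin.succ Fin.succ).det := by
  rw [← det_transpose, det_eq_mul_det_submatrix_of_row_zero]
  · rw [transpose_apply, ← transpose_submatrix, det_transpose]
    simp [matrix, entry, h0, show 2 * (n + 1) = 2 * n + 2 by ring]
  · intro k hk
    have := Fin.pos_of_ne_zero hk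
    simp [matrix, entry, h0, Nat.choose_eq_zero_of_lt (show 2 * (n + 1) - k < 2 * n + 2 by omega),
      Nat.choose_eq_zero_of_lt (show (k : ℕ) < 2 * n + 2 by omega)]

theorem transpose_matrix_piecewise (s : Finset (Fin n)) (c c' : Fin n → ℕ) :
    (matrix n (s.piecewise c c'))ᵀ = s.piecewise (matrix n c)ᵀ (matrix n c')ᵀ := by
  ext k i
  simp only [Finset.piecewise, transpose_apply, matrix, of_apply]
  split_ifs <;> rfl

theorem det_matrix_submatrix_succ (c : Fin (n + 1) → ℕ) :
    ((matrix (n + 1) c).submatrix Fin.succ Fin.succ).det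
      = ∑ s : Finset (Fin n), (matrix n (pascalCols c s)).det := by
  have hpascal : (matrix (n + 1) c).submatrix Fin.succ Fin.succ
      = matrix n (fun r => c r.succ) + matrix n (fun r => c r.succ - 1) := by
    ext i k
    simp [matrix, entry_succ_succ n _ i (by omega)]
  rw [hpascal, ← det_transpose, transpose_add, det_add_eq_sum_det_piecewise]
  simp_rw [pascalCols, ← transpose_matrix_piecewise, det_transpose]

theorem antitone_pascalCols {c : Fin (n + 1) → ℕ} (hc : StrictAnti c) (s : Finset (Fin n)) :
    Antitone (pascalCols c s) := by
  refine antitone_iff_forall_lt.2 fun j k hjk => ?_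
  have := hc (Fin.succ_lt_succ_iff.2 hjk)
  simp only [pascalCols, Finset.piecewise]
  split_ifs <;> omega

theorem not_admissible_pascalCols {c : Fin (n + 1) → ℕ} (hc : StrictAnti c)
    (h0 : 2 * n + 1 ≤ c 0) (h0' : c 0 ≤ 2 * n + 2) (hA : ¬Admissible (n + 1) c)
    (s : Finset (Fin n)) : ¬Admissible n (pascalCols c s) := by
  obtain ⟨j, hj⟩ : ∃ j, c j + 2 * j + 1 < 2 * (n + 1) := by
    by_contra! h
    exact hA ⟨hc, fun j => ⟨h j, (hc.antitone (Fin.zero_le j)).trans (by omega)⟩⟩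
  obtain ⟨r, rfl⟩ : ∃ r, Fin.succ r = j :=
    Fin.exists_succ_eq.2 <| by rintro rfl; simp at hj; omega
  rintro ⟨-, hcols⟩
  have := (hcols r).1
  simp only [pascalCols, Finset.piecewise, Fin.val_succ] at this hj
  split_ifs at this <;> omega

/-- Lowering exactly the columns `r` with `c (r + 1) = 2n + 1 - r`, the largest value allowed by
strict monotonicity, keeps every column within the admissible range. -/
theorem admissible_pascalCols {c : Fin (n + 1) → ℕ} (hA : Admissible (n + 1) c) :
    Admissible n (pascalCols c {r | c r.succ + r ≠ 2 * n + 1}) := by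
  obtain ⟨hc, hcols⟩ := hA
  have hchain (r : Fin n) : c r.succ + r + 1 ≤ 2 * n + 2 := by
    have := hc.antitone_add_val (Fin.zero_le r.succ)
    have := (hcols 0).2
    simp only [Fin.val_succ, Fin.val_zero] at *
    omega
  refine ⟨fun r r' hrr' => ?_, fun r => ?_⟩
  · have := hc (Fin.succ_lt_succ_iff.2 hrr')
    have := hchain r
    have := hchain r'
    have : (r : ℕ) < r' := hrr'
    simp only [pascalCols, Finset.piecewise, Finset.mem_filter, Finset.mem_univ, true_and]
    split_ifs <;> omega
  · have := hchain r
    have := (hcols r.succ).1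
    simp only [pascalCols, Finset.piecewise, Finset.mem_filter, Finset.mem_univ, true_and,
      Fin.val_succ] at *
    split_ifs <;> omega

theorem det_matrix_submatrix_succ_nonneg_and_ne_zero_iff
    (ih : ∀ c' : Fin n → ℕ, Antitone c' →
      0 ≤ (matrix n c').det ∧ ((matrix n c').det ≠ 0 ↔ Admissible n c'))
    {c : Fin (n + 1) → ℕ} (hc : StrictAnti c) (h0 : 2 * n + 1 ≤ c 0) (h0' : c 0 ≤ 2 * n + 2) :
    0 ≤ ((matrix (n + 1) c).submatrix Fin.succ Fin.succ).det ∧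
      (((matrix (n + 1) c).submatrix Fin.succ Fin.succ).det ≠ 0 ↔ Admissible (n + 1) c) := by
  have hterm (s : Finset (Fin n)) := ih (pascalCols c s) (antitone_pascalCols hc s)
  rw [det_matrix_submatrix_succ]
  refine ⟨sum_nonneg fun s _ => (hterm s).1, fun hne => ?_, fun hA => ?_⟩
  · by_contra hA
    exact hne (sum_eq_zero fun s _ => not_not.1 <|
      (hterm s).2.not.2 (not_admissible_pascalCols hc h0 h0' hA s))
  · set s : Finset (Fin n) := {r | c r.succ + r ≠ 2 * n + 1}
    refine (sum_pos' (fun s _ => (hterm s).1) ⟨s, mem_univ s, ?_⟩).ne'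
    exact (hterm s).1.lt_of_ne' ((hterm s).2.2 (admissible_pascalCols hA))

theorem det_matrix_nonneg_and_ne_zero_iff {c : Fin n → ℕ} (hc : Antitone c) :
    0 ≤ (matrix n c).det ∧ ((matrix n c).det ≠ 0 ↔ Admissible n c) := by
  induction n with
  | zero => simp [Admissible, Subsingleton.strictAnti]
  | succ n ih =>
    have of_det_eq_zero (hA : ¬Admissible (n + 1) c) (h : (matrix (n + 1) c).det = 0) :
        0 ≤ (matrix (n + 1) c).det ∧ ((matrix (n + 1) c).det ≠ 0 ↔ Admissible (n + 1) c) := by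
      simp [h, hA]
    by_cases hs : StrictAnti c
    swap
    · exact of_det_eq_zero (fun hA => hs hA.1) (det_matrix_eq_zero_of_not_strictAnti hc hs)
    have hlt (k : Fin (n + 1)) (hk : k ≠ 0) : c k < c 0 := hs (Fin.pos_of_ne_zero hk)
    have hminor (h0 : 2 * n + 1 ≤ c 0) (h0' : c 0 ≤ 2 * n + 2) :=
      det_matrix_submatrix_succ_nonneg_and_ne_zero_iff (fun c' hc' => ih hc') hs h0 h0'
    rcases (by omega : c 0 ≤ 2 * n ∨ c 0 = 2 * n + 1 ∨ c 0 = 2 * n + 2 ∨ 2 * n + 2 < c 0)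
      with h0 | h0 | h0 | h0
    · exact of_det_eq_zero (fun hA => by have := (hA.2 0).1; simp at this; omega)
        (det_matrix_succ_eq_zero fun k => (hc (Fin.zero_le k)).trans h0)
    · rw [det_matrix_succ_eq_two_mul_det_submatrix h0 fun k hk => by have := hlt k hk; omega]
      obtain ⟨hnonneg, hiff⟩ := hminor h0.ge (by omega)
      exact ⟨mul_nonneg zero_le_two hnonneg, by rw [← hiff]; simp⟩
    · rw [det_matrix_succ_eq_det_submatrix h0]
      exact hminor (by omega) h0.le
    · exact of_det_eq_zero (fun hA => by have := (hA.2 0).2; omega)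
        (det_matrix_eq_zero_of_two_mul_lt 0 (by omega))

end

end DehnSommerville

theorem dehnSommerville_odd_basis_iff_general (n : ℕ)
    (b : Fin n → ℕ) (hmono : StrictMono b)
    (hlb : ∀ k, 1 ≤ b k) :
    (Matrix.det (fun i k : Fin n =>
        ((Nat.choose (2 * n - (i : ℕ)) (2 * n + 1 - b k) : ℤ)
          - (Nat.choose (i : ℕ) (2 * n + 1 - b k) : ℤ))) ≠ 0)
      ↔ ∀ k : Fin n, b k ≤ 2 * ((k : ℕ) + 1) := by
  have hc : Antitone fun k => 2 * n + 1 - b k := fun j k hjk =>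
    Nat.sub_le_sub_left (hmono.monotone hjk) _
  refine (DehnSommerville.det_matrix_nonneg_and_ne_zero_iff hc).2.trans ⟨fun ⟨_, h⟩ k => ?_, fun h => ?_⟩
  · have := (h k).1
    dsimp only at this
    omega
  · refine ⟨fun j k hjk => ?_, fun k => ⟨?_, ?_⟩⟩ <;> dsimp only
    · have := hmono hjk
      have := h k
      omega
    · have := h k
      omega
    · have := hlb k
      omega

/-- **Lemma (Dehn–Sommerville bases, odd case).**
Let `n ≥ 1` and let `B = {b_1 < ⋯ < b_n} ⊆ {1,…,2n}` (here `b` is the strictly increasing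
enumeration, 0-indexed, so `b k` is `b_{k+1}`).  The `n×n` matrix with entry
`C(2n-i, 2n+1-b_k) - C(i, 2n+1-b_k)` in row `i` and column `k` has nonzero determinant
iff `b_k ≤ 2k` for all `1 ≤ k ≤ n` (0-indexed: `b k ≤ 2(k+1)`). -/
theorem dehnSommerville_odd_basis_iff (n : ℕ) (hn : 1 ≤ n)
    (b : Fin n → ℕ) (hmono : StrictMono b)
    (hlb : ∀ k, 1 ≤ b k) (hub : ∀ k, b k ≤ 2 * n) :
    (Matrix.det (fun i k : Fin n =>
        ((Nat.choose (2 * n - (i : ℕ)) (2 * n + 1 - b k) : ℤ)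
          - (Nat.choose (i : ℕ) (2 * n + 1 - b k) : ℤ))) ≠ 0)
      ↔ ∀ k : Fin n, b k ≤ 2 * ((k : ℕ) + 1) :=
  dehnSommerville_odd_basis_iff_general n b hmono hlb
end
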